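/- arXiv:1403.0974 — 2 statements merged into one kernel-verified Lean document; each statement's English description precedes it below -/
import Mathlib

section
/- Serial dictatorship outcomes are Pareto optimal: for any permutation π of the agents and any b ∈ Prio(N, A, R, π), there is no alternative c ∈ A such that c R_i b for all agents i and c P_j b for some agent j. -/
/-!
If `c` weakly Pareto-dominates a survivor `b`, then by transitivity `c` survives every round of
maximization as well, so each dictator, maximizing over a set that contains `c`, ranks `b` at
least as high as `c`. Hence no agent strictly prefers `c` to `b`.
-/

/-- The set of `r`-maximal elements of `B`. -/
def maxSet {A : Type*} [DecidableEq A] (r : A → A → Prop) [DecidableRel r]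
    (B : Finset A) : Finset A :=
  B.filter (fun x => ∀ y ∈ B, r x y)

/-- Serial dictatorship outcome set: agents `π 0, π 1, …` successively refine `B`. -/
def prio {A : Type*} [DecidableEq A] {n : ℕ} (R : Fin n → A → A → Prop)
    [∀ i, DecidableRel (R i)] (π : Equiv.Perm (Fin n)) (B : Finset A) : Finset A :=
  (List.ofFn fun k => π k).foldl (fun S i => maxSet (R i) S) B

/-- RSD probability of alternative `a`: average over all permutations of the
uniform lottery on the serial dictatorship outcome set. -/
def rsd {A : Type*} [Fintype A] [DecidableEq A] {n : ℕ} (R : Fin n → A → A → Prop)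
    [∀ i, DecidableRel (R i)] (a : A) : ℚ :=
  (∑ π : Equiv.Perm (Fin n),
      if a ∈ prio R π Finset.univ then ((prio R π Finset.univ).card : ℚ)⁻¹ else 0) /
    (Nat.factorial n : ℚ)

section MaxSet

variable {A : Type*} [DecidableEq A]

theorem mem_maxSet {r : A → A → Prop} [DecidableRel r] {B : Finset A} {x : A} :
    x ∈ maxSet r B ↔ x ∈ B ∧ ∀ y ∈ B, r x y :=
  Finset.mem_filter

theorem maxSet_subset (r : A → A → Prop) [DecidableRel r] (B : Finset A) :
    maxSet r B ⊆ B :=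
  Finset.filter_subset _ _

theorem mem_maxSet_of_rel {r : A → A → Prop} [DecidableRel r] (htrans : Transitive r)
    {B : Finset A} {b c : A} (hb : b ∈ maxSet r B) (hc : c ∈ B) (hcb : r c b) :
    c ∈ maxSet r B :=
  mem_maxSet.2 ⟨hc, fun y hy => htrans hcb ((mem_maxSet.1 hb).2 y hy)⟩

variable {ι : Type*} {R : ι → A → A → Prop} [∀ i, DecidableRel (R i)]

theorem foldl_maxSet_subset (l : List ι) (B : Finset A) :
    l.foldl (fun S i => maxSet (R i) S) B ⊆ B := by
  induction l generalizing B with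
  | nil => exact subset_rfl
  | cons i l ih => exact (ih _).trans (maxSet_subset _ _)

theorem rel_of_mem_foldl_maxSet (htrans : ∀ i, Transitive (R i)) {l : List ι}
    {B : Finset A} {b c : A} (hcb : ∀ i ∈ l, R i c b) (hc : c ∈ B)
    (hb : b ∈ l.foldl (fun S i => maxSet (R i) S) B) :
    ∀ i ∈ l, R i b c := by
  induction l generalizing B with
  | nil => simp
  | cons i l ih =>
    rw [List.foldl_cons] at hb
    have hbi : b ∈ maxSet (R i) B := foldl_maxSet_subset l _ hb
    have hci : c ∈ maxSet (R i) B :=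
      mem_maxSet_of_rel (htrans i) hbi hc (hcb i List.mem_cons_self)
    rintro j (_ | ⟨_, hj⟩)
    · exact (mem_maxSet.1 hbi).2 c hc
    · exact ih (fun k hk => hcb k (List.mem_cons_of_mem i hk)) hci hb j hj

end MaxSet

theorem rel_of_mem_prio {A : Type*} [DecidableEq A] {n : ℕ} {R : Fin n → A → A → Prop}
    [∀ i, DecidableRel (R i)] (htrans : ∀ i, Transitive (R i)) {π : Equiv.Perm (Fin n)}
    {B : Finset A} {b c : A} (hcb : ∀ i, R i c b) (hc : c ∈ B) (hb : b ∈ prio R π B) (i : Fin n) :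
    R i b c :=
  rel_of_mem_foldl_maxSet htrans (fun j _ => hcb j) hc hb i
    (List.mem_ofFn.2 ⟨π.symm i, π.apply_symm_apply i⟩)

theorem stmt_12_general {A : Type*} [Fintype A] [DecidableEq A] {n : ℕ}
    (R : Fin n → A → A → Prop) [∀ i, DecidableRel (R i)]
    (htrans : ∀ i, Transitive (R i))
    (π : Equiv.Perm (Fin n)) (b : A) (hb : b ∈ prio R π Finset.univ) :
    ¬ ∃ c : A, (∀ i, R i c b) ∧ (∃ j, R j c b ∧ ¬ R j b c) := by
  rintro ⟨c, hcb, j, -, hbc⟩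
  exact hbc (rel_of_mem_prio htrans hcb (Finset.mem_univ c) hb j)

/-- serial dictatorship outcomes are Pareto optimal. -/
theorem stmt_12 {A : Type*} [Fintype A] [DecidableEq A] [Nonempty A] {n : ℕ}
    (R : Fin n → A → A → Prop) [∀ i, DecidableRel (R i)]
    (htot : ∀ i, Total (R i)) (htrans : ∀ i, Transitive (R i))
    (π : Equiv.Perm (Fin n)) (b : A) (hb : b ∈ prio R π Finset.univ) :
    ¬ ∃ c : A, (∀ i, R i c b) ∧ (∃ j, R j c b ∧ ¬ R j b c) :=
  stmt_12_general R htrans π b hb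
end

section
/- Fix an alternative a and for each agent i let its signature be (C_i, D_i) where C_i = { b : b I_i a } and D_i = { b : b P_i a }. If every agent's weak preference relation is a total preorder and ∩_{i ∈ N} C_i = {a}, then for any permutation π of the agents, Prio(N, A, R, π) ∋ a implies Prio(N, A, R, π) = {a}. -/

lemma foldl_subset {A : Type*} [DecidableEq A] {n : ℕ} (R : Fin n → A → A → Prop)
    [∀ i, DecidableRel (R i)] :
    ∀ (l : List (Fin n)) (B : Finset A) (x : A),
      x ∈ l.foldl (fun S j => maxSet (R j) S) B → x ∈ B := by
  intro l
  induction l with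
  | nil => intro B x hx; simpa using hx
  | cons h t ih =>
    intro B x hx
    simp only [List.foldl_cons] at hx
    have := ih _ x hx
    simp only [maxSet, Finset.mem_filter] at this
    exact this.1

lemma foldl_rel {A : Type*} [DecidableEq A] {n : ℕ} (R : Fin n → A → A → Prop)
    [∀ i, DecidableRel (R i)] :
    ∀ (l : List (Fin n)) (B : Finset A) (x y : A) (i : Fin n), i ∈ l →
      x ∈ l.foldl (fun S j => maxSet (R j) S) B →
      y ∈ l.foldl (fun S j => maxSet (R j) S) B → R i x y := by
  intro l
  induction l with
  | nil => intro B x y i hi; simp at hi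
  | cons h t ih =>
    intro B x y i hi hx hy
    simp only [List.foldl_cons] at hx hy
    rcases List.mem_cons.mp hi with rfl | hit
    · -- x, y in foldl t (maxSet (R h) B) ⊆ maxSet (R h) B
      have hsub := fun z hz => foldl_subset R t (maxSet (R i) B) z hz
      have hx' := hsub x hx
      have hy' := hsub y hy
      simp only [maxSet, Finset.mem_filter] at hx' hy'
      exact hx'.2 y hy'.1
    · exact ih _ x y i hit hx hy

/-- if no other alternative is indifferent to `a` for every agent
(`⋂ᵢ Cᵢ = {a}` where `Cᵢ = {b : b Iᵢ a}`), then whenever the serial dictatorship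
outcome set contains `a`, it is exactly `{a}`. -/
theorem stmt_13 {A : Type*} [Fintype A] [DecidableEq A] {n : ℕ}
    (R : Fin n → A → A → Prop) [∀ i, DecidableRel (R i)]
    (htot : ∀ i, Total (R i)) (htrans : ∀ i, Transitive (R i))
    (a : A)
    (hC : {b : A | ∀ i : Fin n, R i b a ∧ R i a b} = {a})
    (π : Equiv.Perm (Fin n))
    (ha : a ∈ prio R π Finset.univ) :
    prio R π Finset.univ = {a} := by
  apply Finset.eq_singleton_iff_unique_mem.mpr
  refine ⟨ha, fun b hb => ?_⟩
  have hmem : b ∈ {c : A | ∀ i : Fin n, R i c a ∧ R i a c} := by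
    intro i
    have hil : i ∈ List.ofFn (fun k => π k) := by
      rw [List.mem_ofFn]; exact ⟨π.symm i, by simp⟩
    exact ⟨foldl_rel R _ _ b a i hil hb ha, foldl_rel R _ _ a b i hil ha hb⟩
  rw [hC] at hmem
  exact hmem
end
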